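/- arXiv:2601.03999 — 2 statements merged into one kernel-verified Lean document; each statement's English description precedes it below -/
import Mathlib

section
/- Let (X,ρ,μ) be a 𝐝-dimensional metric measure space, K an α-kernel on X, Q a real-valued continuous function on X, s > 1, and f ∈ L¹_loc(X,μ). There exists a constant C (depending on 𝐝, s and the constant of the space) such that for all x ∈ X, all 0 < u₀ < u₁, and all 0 < δ < 1: |S(u₀,x) − S(u₁,x) − S^δ(u₀,x) + S^δ(u₁,x)| ≤ C δ^{1−1/s} (M(|f|^s)(x))^{1/s}, where S(u,x) := S_u(K,Q,f)(x) and S^δ(u,x) := S^δ_u(K,Q,f)(x). -/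
open MeasureTheory Metric Complex Filter Set
open scoped ENNReal NNReal

noncomputable section

/-- `e(t) = e^{it}`. -/
def expi (t : ℝ) : ℂ := Complex.exp (t * Complex.I)

/-- The `r`-variation seminorm (valued in `ℝ≥0∞`) of `a : ℝ → ℂ` along the index set `I`. -/
def vNorm (r : ℝ) (I : Set ℝ) (a : ℝ → ℂ) : ℝ≥0∞ :=
  ⨆ (N : ℕ) (t : ℕ → ℝ) (_ : ∀ n, n ≤ N → t n ∈ I) (_ : ∀ n, n < N → t n < t (n + 1)),
    (∑ n ∈ Finset.range N, (‖a (t (n + 1)) - a (t n)‖₊ : ℝ≥0∞) ^ r) ^ (1 / r)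

/-- The `L^p` norm of an `ℝ≥0∞`-valued function. -/
def lpNormENN {X : Type*} [MeasurableSpace X] (p : ℝ) (μ : Measure X) (g : X → ℝ≥0∞) : ℝ≥0∞ :=
  (∫⁻ x, g x ^ p ∂μ) ^ (1 / p)

/-- `d_B(f,g) = sup_{x,y ∈ B} |f(x)-f(y)-g(x)+g(y)|`. -/
def dB {X : Type*} (B : Set X) (f g : X → ℝ) : ℝ :=
  sSup ((fun q : X × X => |f q.1 - f q.2 - g q.1 + g q.2|) '' (B ×ˢ B))

/-- Inhomogeneous Lipschitz norm `‖φ‖_{C^{0,1}(B)}` on the ball `B = B(z,R)`. -/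
def c01Norm {X : Type*} [MetricSpace X] (z : X) (R : ℝ) (φ : X → ℂ) : ℝ :=
  sSup ((fun x => ‖φ x‖) '' ball z R) +
    R * sSup ((fun q : X × X => ‖φ q.1 - φ q.2‖ / dist q.1 q.2) ''
      ((ball z R ×ˢ ball z R) ∩ {q | q.1 ≠ q.2}))

/-- A compatible collection of real-valued continuous functions, with constant `C`. -/
structure IsCompatible {X : Type*} [MetricSpace X] (𝒬 : Set (X → ℝ)) (C : ℝ) : Prop where
  cont : ∀ Q ∈ 𝒬, Continuous Q
  exists_base : ∃ x₀ : X, ∀ Q ∈ 𝒬, Q x₀ = 0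
  dB_symm : ∀ (z : X) (R : ℝ), 0 < R → ∀ f ∈ 𝒬, ∀ g ∈ 𝒬,
    dB (ball z R) f g = dB (ball z R) g f
  dB_eq_zero : ∀ (z : X) (R : ℝ), 0 < R → ∀ f ∈ 𝒬, ∀ g ∈ 𝒬,
    dB (ball z R) f g = 0 → f = g
  dB_triangle : ∀ (z : X) (R : ℝ), 0 < R → ∀ f ∈ 𝒬, ∀ g ∈ 𝒬, ∀ h ∈ 𝒬,
    dB (ball z R) f h ≤ dB (ball z R) f g + dB (ball z R) g h
  dB_doubling : ∀ (x₁ x₂ : X) (R : ℝ), 0 < R → x₁ ∈ ball x₂ (2 * R) →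
    ∀ f ∈ 𝒬, ∀ g ∈ 𝒬, dB (ball x₂ (2 * R)) f g ≤ C * dB (ball x₁ R) f g
  dB_growth : ∀ (x₁ x₂ : X) (R : ℝ), 0 < R → ball x₁ R ⊆ ball x₂ (C * R) →
    ∀ f ∈ 𝒬, ∀ g ∈ 𝒬, 2 * dB (ball x₁ R) f g ≤ dB (ball x₂ (C * R)) f g
  dB_covering : ∀ (z : X) (R : ℝ), 0 < R → ∀ (R' : ℝ), 0 < R' → ∀ f₀ ∈ 𝒬,
    ∃ F : Finset (X → ℝ), ↑F ⊆ 𝒬 ∧ (F.card : ℝ) ≤ C ∧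
      ∀ g ∈ 𝒬, dB (ball z R) f₀ g ≤ 2 * R' → ∃ h ∈ F, dB (ball z R) h g ≤ R'

/-- The collection `𝒬` is `ε`-cancellative with constant `C`, on a `D`-dimensional space. -/
def IsCancellative {X : Type*} [MetricSpace X] [MeasurableSpace X] (μ : Measure X) (D : ℝ)
    (𝒬 : Set (X → ℝ)) (ε C : ℝ) : Prop :=
  ∀ (z : X) (R : ℝ), 0 < R → ∀ φ : X → ℂ, (∃ L, LipschitzWith L φ) →
    Function.support φ ⊆ ball z R → ∀ f ∈ 𝒬, ∀ g ∈ 𝒬,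
      ‖∫ x in ball z R, expi (f x - g x) * φ x ∂μ‖ ≤
        C * R ^ D * c01Norm z R φ * (1 + dB (ball z R) f g) ^ (-ε)

/-- `α`-kernel on a `D`-dimensional metric measure space. -/
def IsAlphaKernel {X : Type*} [MetricSpace X] [MeasurableSpace X] (D α : ℝ)
    (K : X → X → ℂ) : Prop :=
  Measurable (Function.uncurry K) ∧
  (∀ x y : X, x ≠ y → ‖K x y‖ ≤ dist x y ^ (-D)) ∧
  (∀ x y y' : X, 2 * dist y y' ≤ dist x y →
    ‖K x y - K x y'‖ + ‖K y x - K y' x‖ ≤ (dist y y' / dist x y) ^ α * dist x y ^ (-D))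

/-- One-sided `α`-kernel. -/
def IsOneSidedKernel {X : Type*} [MetricSpace X] [MeasurableSpace X] (D α : ℝ)
    (K : X → X → ℂ) : Prop :=
  Measurable (Function.uncurry K) ∧
  (∀ x y : X, x ≠ y → ‖K x y‖ ≤ dist x y ^ (-D)) ∧
  (∀ x y y' : X, 2 * dist y y' ≤ dist x y →
    ‖K x y - K x y'‖ ≤ (dist y y' / dist x y) ^ α * dist x y ^ (-D))

/-- The cancellation condition for a kernel `K`. -/
def CancelCond {X : Type*} [MetricSpace X] [MeasurableSpace X] (μ : Measure X)
    (K : X → X → ℂ) : Prop :=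
  ∀ (x : X) (R₁ R₂ : ℝ), 0 < R₁ → R₁ < R₂ →
    (∫ y in ball x R₂ \ ball x R₁, K x y ∂μ) = 0 ∧
    (∫ y in ball x R₂ \ ball x R₁, K y x ∂μ) = 0

/-- Truncated modulated singular integral `S_u(K,Q,f)(x)`. -/
def singOp {X : Type*} [MetricSpace X] [MeasurableSpace X] (μ : Measure X) (K : X → X → ℂ)
    (u : ℝ) (Q : X → ℝ) (f : X → ℂ) (x : X) : ℂ :=
  ∫ y in {y | u < dist x y}, K x y * f y * expi (Q y) ∂μ

/-- Truncated modulated average `A_R(Q,f)(x)`. -/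
def avgOp {X : Type*} [MetricSpace X] [MeasurableSpace X] (μ : Measure X)
    (R : ℝ) (Q : X → ℝ) (f : X → ℂ) (x : X) : ℂ :=
  (μ (ball x R)).toReal⁻¹ • ∫ y in ball x R, f y * expi (Q y) ∂μ

/-- `ζ^δ(x) = log(1+δ)⁻¹ 1_{[1,1+δ]}(x)`. -/
def zetaD (δ x : ℝ) : ℝ := (Real.log (1 + δ))⁻¹ * (Set.Icc 1 (1 + δ)).indicator 1 x

/-- `(ζ^δ)_t(x) = t⁻¹ ζ^δ(x/t)`. -/
def zetaDt (δ t x : ℝ) : ℝ := t⁻¹ * zetaD δ (x / t)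

/-- `Z^δ_{a,b}(x) = ∫_a^b (ζ^δ)_t(x) dt`. -/
def Zcut (δ a b x : ℝ) : ℝ := ∫ t in a..b, zetaDt δ t x

/-- `Z^δ_{a,∞}(x) = ∫_a^∞ (ζ^δ)_t(x) dt`. -/
def ZcutInf (δ a x : ℝ) : ℝ := ∫ t in Set.Ioi a, zetaDt δ t x

/-- `δ`-smoothly truncated modulated singular integral `S^δ_u(K,Q,f)(x)`. -/
def singOpD {X : Type*} [MetricSpace X] [MeasurableSpace X] (μ : Measure X) (K : X → X → ℂ)
    (δ u : ℝ) (Q : X → ℝ) (f : X → ℂ) (x : X) : ℂ :=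
  ∫ y, (ZcutInf δ u (dist x y) : ℂ) * K x y * f y * expi (Q y) ∂μ

/-- `δ`-smoothly truncated modulated average `A^δ_R(Q,f)(x)` on a `D`-dimensional space. -/
def avgOpD {X : Type*} [MetricSpace X] [MeasurableSpace X] (μ : Measure X) (D : ℝ)
    (δ R : ℝ) (Q : X → ℝ) (f : X → ℂ) (x : X) : ℂ :=
  (R ^ (-D) : ℝ) • ∫ y, (Zcut δ 0 R (dist x y) : ℂ) * f y * expi (Q y) ∂μ

/-- `M(|f|^s)(x)`, the Hardy–Littlewood maximal function of `|f|^s`. -/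
def maxFn {X : Type*} [MetricSpace X] [MeasurableSpace X] (μ : Measure X) (s : ℝ)
    (f : X → ℂ) (x : X) : ℝ≥0∞ :=
  ⨆ (R : ℝ) (_ : 0 < R), (μ (ball x R))⁻¹ * ∫⁻ y in ball x R, (‖f y‖₊ : ℝ≥0∞) ^ s ∂μ


/-! The sharp and the smooth truncation at radius `u` differ by the factor `1_{ρ > u} - Z^δ_u(ρ)`,
which lies in `[-1, 1]` and vanishes off the thin annulus `u < ρ ≤ (1 + δ) u`. There `|K| ≤ u^{-𝐝}`,
so by Hölder each difference `S(u) - S^δ(u)` is at most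
`u^{-𝐝} μ(annulus)^{1 - 1/s} (μ(B(x, 2u)) M(|f|^s)(x))^{1/s}`. Since `μ(annulus) = O(δ u^𝐝)` and
`μ(B(x, 2u)) = O(u^𝐝)`, the powers of `u` cancel and `C δ^{1 - 1/s} M(|f|^s)(x)^{1/s}` remains.

The exact volume growth also bounds the size of separated sets in a ball, so balls are totally
bounded and the complete space `X` is proper; a locally integrable `f` is then integrable on balls.
-/

lemma zetaDt_eq_indicator {δ t : ℝ} (hδ : 0 < δ) (ht : 0 < t) (r : ℝ) :
    zetaDt δ t r = (Real.log (1 + δ))⁻¹ * (Icc (r / (1 + δ)) r).indicator (·⁻¹) t := by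
  have hmem : r / t ∈ Icc 1 (1 + δ) ↔ t ∈ Icc (r / (1 + δ)) r := by
    rw [mem_Icc, mem_Icc, le_div_iff₀ ht, div_le_iff₀ ht, div_le_iff₀ (by linarith), one_mul,
      mul_comm, and_comm]
  by_cases h : t ∈ Icc (r / (1 + δ)) r
  · simp [zetaDt, zetaD, h, hmem.2 h, mul_comm]
  · simp [zetaDt, zetaD, h, mt hmem.1 h]

lemma integral_Ioc_inv {m : ℝ} (hm : 0 < m) (r : ℝ) :
    ∫ t in Ioc m r, t⁻¹ = Real.log (max r m) - Real.log m := by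
  rcases le_total r m with hrm | hmr
  · simp [Ioc_eq_empty_of_le hrm, max_eq_right hrm]
  · rw [← intervalIntegral.integral_of_le hmr, integral_inv_of_pos hm (hm.trans_le hmr),
      max_eq_left hmr, Real.log_div (hm.trans_le hmr).ne' hm.ne']

theorem ZcutInf_eq {δ u : ℝ} (hδ : 0 < δ) (hu : 0 < u) (r : ℝ) :
    ZcutInf δ u r =
      (Real.log (1 + δ))⁻¹ * (Real.log (max r u) - Real.log (max (r / (1 + δ)) u)) := by
  have hIcc : (Ioi u ∩ Icc (r / (1 + δ)) r : Set ℝ) =ᵐ[volume]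
      (Ioi u ∩ Ioc (r / (1 + δ)) r : Set ℝ) :=
    (ae_eq_refl _).inter Ioc_ae_eq_Icc.symm
  have hmax : max r (max (r / (1 + δ)) u) = max r u := by
    rw [max_left_comm, max_eq_right]
    rcases le_total 0 r with hr | hr
    · exact le_max_of_le_left (div_le_self hr (by linarith))
    · exact le_max_of_le_right ((div_nonpos_of_nonpos_of_nonneg hr (by linarith)).trans hu.le)
  rw [ZcutInf, setIntegral_congr_fun measurableSet_Ioi
      (fun t ht => zetaDt_eq_indicator hδ (hu.trans ht) r), integral_const_mul,
    setIntegral_indicator measurableSet_Icc, setIntegral_congr_set hIcc, inter_comm,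
    Ioc_inter_Ioi, integral_Ioc_inv (lt_max_of_lt_right hu), hmax]

theorem measurable_ZcutInf {δ u : ℝ} (hδ : 0 < δ) (hu : 0 < u) : Measurable (ZcutInf δ u) := by
  rw [funext (ZcutInf_eq hδ hu)]
  fun_prop

lemma ZcutInf_eq_zero_of_le {δ u r : ℝ} (hδ : 0 < δ) (hu : 0 < u) (hr : r ≤ u) :
    ZcutInf δ u r = 0 := by
  have : r / (1 + δ) ≤ u := by
    rcases le_total 0 r with h0 | h0
    · exact (div_le_self h0 (by linarith)).trans hr
    · exact (div_nonpos_of_nonpos_of_nonneg h0 (by linarith)).trans hu.le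
  simp [ZcutInf_eq hδ hu, max_eq_right hr, max_eq_right this]

lemma ZcutInf_eq_one_of_le {δ u r : ℝ} (hδ : 0 < δ) (hu : 0 < u) (hr : u * (1 + δ) ≤ r) :
    ZcutInf δ u r = 1 := by
  have hur : u ≤ r := le_trans (le_mul_of_one_le_right hu.le (by linarith)) hr
  have hr0 : 0 < r := hu.trans_le hur
  rw [ZcutInf_eq hδ hu, max_eq_left hur, max_eq_left ((le_div_iff₀ (by linarith)).2 hr),
    Real.log_div hr0.ne' (by linarith), sub_sub_cancel,
    inv_mul_cancel₀ (Real.log_pos (by linarith)).ne']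

lemma ZcutInf_mem_Icc {δ u : ℝ} (hδ : 0 < δ) (hu : 0 < u) (r : ℝ) : ZcutInf δ u r ∈ Icc 0 1 := by
  have hL : 0 < Real.log (1 + δ) := Real.log_pos (by linarith)
  have ha : 0 < max (r / (1 + δ)) u := lt_max_of_lt_right hu
  have hab : max (r / (1 + δ)) u ≤ max r u := by
    rcases le_total 0 r with h0 | h0
    · exact max_le_max (div_le_self h0 (by linarith)) le_rfl
    · exact (max_eq_right ((div_nonpos_of_nonpos_of_nonneg h0 (by linarith)).trans hu.le)).trans_le
        (le_max_right _ _)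
  have hba : max r u ≤ (1 + δ) * max (r / (1 + δ)) u := by
    rw [mul_max_of_nonneg _ _ (by linarith), mul_div_cancel₀ _ (by linarith)]
    exact max_le_max le_rfl (le_mul_of_one_le_left hu.le (by linarith))
  rw [ZcutInf_eq hδ hu, mem_Icc, inv_mul_le_one₀ hL]
  refine ⟨mul_nonneg (inv_nonneg.2 hL.le) (sub_nonneg.2 (Real.log_le_log ha hab)), ?_⟩
  have := Real.log_le_log (ha.trans_le hab) hba
  rw [Real.log_mul (by linarith) ha.ne'] at this
  linarith

lemma abs_indicator_sub_ZcutInf_le {δ u : ℝ} (hδ : 0 < δ) (hu : 0 < u) (r : ℝ) :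
    |(Ioi u).indicator 1 r - ZcutInf δ u r| ≤ (Ioc u (u * (1 + δ))).indicator 1 r := by
  rcases le_or_gt r u with hru | hur
  · simp [ZcutInf_eq_zero_of_le hδ hu hru, not_lt.2 hru]
  rcases le_or_gt r (u * (1 + δ)) with hr | hr
  · have := ZcutInf_mem_Icc hδ hu r
    simp only [indicator_of_mem (show r ∈ Ioi u from hur),
      indicator_of_mem (show r ∈ Ioc u (u * (1 + δ)) from ⟨hur, hr⟩), Pi.one_apply]
    rw [abs_le]; constructor <;> linarith [this.1, this.2]
  · simp [ZcutInf_eq_one_of_le hδ hu hr.le, hur, not_le.2 hr]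

section MeasureBall

variable {X : Type*} [MetricSpace X] [MeasurableSpace X] [OpensMeasurableSpace X]

lemma encard_mul_le_measure_ball_of_isSeparated {μ : Measure X} {ε : ℝ≥0} {m : ℝ≥0∞}
    {C : Set X} {z : X} {R : ℝ} (hsep : IsSeparated (ε : ℝ≥0∞) C) (hCz : C ⊆ ball z R)
    (hm : ∀ y ∈ C, m ≤ μ (ball y (ε / 2))) :
    (C.encard : ℝ≥0∞) * m ≤ μ (ball z (R + ε / 2)) := by
  have hdisj : Pairwise (Function.onFun Disjoint fun y : C => ball (y : X) (ε / 2)) := by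
    intro y y' hne
    have : (ε : ℝ≥0∞) < edist (y : X) y' := hsep y.2 y'.2 (Subtype.coe_ne_coe.2 hne)
    rw [edist_nndist, ENNReal.coe_lt_coe, ← NNReal.coe_lt_coe, coe_nndist] at this
    exact ball_disjoint_ball (by linarith)
  have hsub : (⋃ y : C, ball (y : X) (ε / 2)) ⊆ ball z (R + ε / 2) :=
    iUnion_subset fun y => ball_subset_ball' (by linarith [mem_ball.1 (hCz y.2)])
  calc (C.encard : ℝ≥0∞) * m = ∑' _ : C, m := by rw [ENNReal.tsum_const, ENat.card_coe_set_eq]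
    _ ≤ ∑' y : C, μ (ball (y : X) (ε / 2)) := ENNReal.tsum_le_tsum fun y => hm y y.2
    _ ≤ μ (⋃ y : C, ball (y : X) (ε / 2)) :=
        tsum_meas_le_meas_iUnion_of_disjoint μ (fun _ => measurableSet_ball) hdisj
    _ ≤ μ (ball z (R + ε / 2)) := measure_mono hsub

theorem totallyBounded_ball_of_measure_ball_eq {μ : Measure X} {D A : ℝ} (hA : 0 < A)
    (hvol : ∀ (x : X) (R : ℝ), 0 < R → μ (ball x R) = ENNReal.ofReal (A * R ^ D))
    (z : X) (R : ℝ) : TotallyBounded (ball z R) := by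
  refine Metric.totallyBounded_iff.2 fun ε hε => ?_
  set ε' : ℝ≥0 := ⟨ε / 2, by positivity⟩
  have hε' : (0 : ℝ) < ε' / 2 := show 0 < ε / 2 / 2 by positivity
  set m := ENNReal.ofReal (A * (ε' / 2) ^ D)
  have hm : m ≠ 0 := by simp only [m, ne_eq, ENNReal.ofReal_eq_zero, not_le]; positivity
  have hM : μ (ball z (R + ε' / 2)) ≠ ⊤ :=
    ne_top_of_le_ne_top (hvol z (|R| + ε' / 2) (by positivity) ▸ ENNReal.ofReal_ne_top)
      (measure_mono (ball_subset_ball (by linarith [le_abs_self R])))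
  obtain ⟨N, hN⟩ := ENNReal.exists_nat_gt (ENNReal.div_ne_top hM hm)
  have hpack : packingNumber ε' (ball z R) ≠ ⊤ := by
    refine ne_top_of_le_ne_top (ENat.natCast_ne_top N)
      (iSup₂_le fun C hCz => iSup_le fun hsep => ?_)
    have := encard_mul_le_measure_ball_of_isSeparated hsep hCz fun y _ => (hvol y _ hε').ge
    rw [← ENNReal.le_div_iff_mul_le (Or.inl hm) (Or.inr hM)] at this
    exact_mod_cast this.trans hN.le
  refine ⟨maximalSeparatedSet ε' (ball z R),
    Set.encard_ne_top_iff.1 (encard_maximalSeparatedSet hpack ▸ hpack), fun y hy => ?_⟩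
  obtain ⟨c, hc, hyc⟩ := isCover_maximalSeparatedSet hpack hy
  have : edist y c ≤ ε' := hyc
  rw [edist_nndist, ENNReal.coe_le_coe, ← NNReal.coe_le_coe, coe_nndist] at this
  exact mem_biUnion hc (mem_ball.2 (this.trans_lt (show ε / 2 < ε by linarith)))

theorem properSpace_of_measure_ball_eq [CompleteSpace X] {μ : Measure X} {D A : ℝ} (hA : 0 < A)
    (hvol : ∀ (x : X) (R : ℝ), 0 < R → μ (ball x R) = ENNReal.ofReal (A * R ^ D)) :
    ProperSpace X :=
  ⟨fun z R => ((totallyBounded_ball_of_measure_ball_eq hA hvol z (R + 1)).subset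
    (closedBall_subset_ball (lt_add_one R))).isCompact_of_isClosed isClosed_closedBall⟩

end MeasureBall

lemma enorm_integral_sub_integral_le {α E : Type*} [MeasurableSpace α] {μ : Measure α}
    [NormedAddCommGroup E] [NormedSpace ℝ E] {h φ : α → E} (hint : Integrable (h - φ) μ) :
    ‖∫ a, h a ∂μ - ∫ a, φ a ∂μ‖ₑ ≤ ∫⁻ a, ‖h a - φ a‖ₑ ∂μ := by
  -- if `h` is not integrable then neither is `φ`, and both integrals are `0`
  by_cases hh : Integrable h μ
  · rw [← integral_sub hh (by simpa using hh.sub hint)]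
    exact enorm_integral_le_lintegral_enorm _
  · have hφ : ¬ Integrable φ μ := fun hφ => hh (by simpa using hφ.add hint)
    simp [integral_undef hh, integral_undef hφ]

lemma one_add_two_mul_rpow_sub_one_le {D δ : ℝ} (hD : 0 ≤ D) (hδ : 0 ≤ δ) (hδ1 : δ ≤ 1) :
    (1 + 2 * δ) ^ D - 1 ≤ (Real.exp (2 * D) - 1) * δ := by
  have hexp : (1 + 2 * δ) ^ D ≤ Real.exp (δ * (2 * D)) := by
    calc (1 + 2 * δ) ^ D ≤ Real.exp (2 * δ) ^ D := by
          gcongr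
          linarith [Real.add_one_le_exp (2 * δ)]
      _ = Real.exp (δ * (2 * D)) := by rw [← Real.exp_mul]; ring_nf
  have hconv := convexOn_exp.2 (mem_univ (2 * D)) (mem_univ 0) hδ (by linarith : 0 ≤ 1 - δ)
    (by ring)
  simp only [smul_eq_mul, mul_zero, add_zero, Real.exp_zero, mul_one] at hconv
  linarith

lemma mul_rpow_mul_mul_rpow_of_add_eq_one {a x y p q : ℝ} (ha : 0 ≤ a) (hx : 0 ≤ x) (hy : 0 ≤ y)
    (hpq : p + q = 1) : (a * x) ^ p * (a * y) ^ q = a * (x ^ p * y ^ q) := by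
  rw [Real.mul_rpow ha hx, Real.mul_rpow ha hy, mul_mul_mul_comm,
    ← Real.rpow_add' ha (by simp [hpq]), hpq, Real.rpow_one]

section Annulus

variable {X : Type*} [MetricSpace X] [MeasurableSpace X] [OpensMeasurableSpace X]

def annulus (x : X) (a b : ℝ) : Set X := {y | dist x y ∈ Ioc a b}

lemma measurableSet_annulus (x : X) (a b : ℝ) : MeasurableSet (annulus x a b) :=
  measurableSet_Ioc.preimage (continuous_const.dist continuous_id).measurable

lemma measure_annulus_le {μ : Measure X} {D A : ℝ} (hD : 0 ≤ D) (hA : 0 ≤ A)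
    (hvol : ∀ (x : X) (R : ℝ), 0 < R → μ (ball x R) = ENNReal.ofReal (A * R ^ D))
    (x : X) {u δ : ℝ} (hu : 0 < u) (hδ : 0 < δ) (hδ1 : δ ≤ 1) :
    μ (annulus x u (u * (1 + δ))) ≤
      ENNReal.ofReal (u ^ D * (A * (Real.exp (2 * D) - 1) * δ)) := by
  -- the annulus is closed at its outer radius, so it is compared with a slightly larger open ball
  have hsub : annulus x u (u * (1 + δ)) ⊆ ball x (u * (1 + 2 * δ)) \ ball x u :=
    fun y hy => ⟨mem_ball'.2 (hy.2.trans_lt (by nlinarith)), fun h => lt_asymm (mem_ball'.1 h) hy.1⟩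
  calc μ (annulus x u (u * (1 + δ))) ≤ μ (ball x (u * (1 + 2 * δ)) \ ball x u) := measure_mono hsub
    _ = ENNReal.ofReal (A * (u * (1 + 2 * δ)) ^ D) - ENNReal.ofReal (A * u ^ D) := by
        rw [measure_sdiff (ball_subset_ball (by nlinarith)) measurableSet_ball.nullMeasurableSet
          (by simp [hvol x u hu]), hvol x _ (by positivity), hvol x u hu]
    _ = ENNReal.ofReal (u ^ D * (A * ((1 + 2 * δ) ^ D - 1))) := by
        rw [← ENNReal.ofReal_sub _ (by positivity), Real.mul_rpow hu.le (by positivity)]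
        ring_nf
    _ ≤ ENNReal.ofReal (u ^ D * (A * (Real.exp (2 * D) - 1) * δ)) := by
        gcongr ENNReal.ofReal (u ^ D * ?_)
        rw [mul_assoc]
        exact mul_le_mul_of_nonneg_left (one_add_two_mul_rpow_sub_one_le hD hδ.le hδ1) hA

end Annulus

section MaximalFunction

variable {X : Type*} [MetricSpace X] [MeasurableSpace X] {μ : Measure X}

lemma setLIntegral_ball_le_measure_mul_maxFn {s : ℝ} (f : X → ℂ) (x : X) {R : ℝ} (hR : 0 < R)
    (hball : μ (ball x R) ≠ ∞) :
    ∫⁻ y in ball x R, ‖f y‖ₑ ^ s ∂μ ≤ μ (ball x R) * maxFn μ s f x := by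
  rcases eq_or_ne (μ (ball x R)) 0 with h0 | h0
  · simp [setLIntegral_measure_zero _ _ h0]
  calc ∫⁻ y in ball x R, ‖f y‖ₑ ^ s ∂μ
      = μ (ball x R) * ((μ (ball x R))⁻¹ * ∫⁻ y in ball x R, ‖f y‖ₑ ^ s ∂μ) := by
        rw [← mul_assoc, ENNReal.mul_inv_cancel h0 hball, one_mul]
    _ ≤ μ (ball x R) * maxFn μ s f x := by
        gcongr
        exact le_iSup₂ (f := fun (R : ℝ) (_ : 0 < R) =>
          (μ (ball x R))⁻¹ * ∫⁻ y in ball x R, (‖f y‖₊ : ℝ≥0∞) ^ s ∂μ) R hR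

lemma setLIntegral_enorm_le_of_subset_ball {s : ℝ} (hs : 1 < s) {f : X → ℂ} {E : Set X}
    (hf : AEStronglyMeasurable f (μ.restrict E)) {x : X} {R : ℝ} (hR : 0 < R)
    (hE : E ⊆ ball x R) (hball : μ (ball x R) ≠ ∞) :
    ∫⁻ y in E, ‖f y‖ₑ ∂μ ≤ (μ (ball x R) * maxFn μ s f x) ^ (1 / s) * μ E ^ (1 - 1 / s) := by
  have hq := Real.HolderConjugate.conjExponent hs
  have hholder := ENNReal.lintegral_mul_le_Lp_mul_Lq (μ.restrict E) hq hf.enorm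
    (aemeasurable_const (b := (1 : ℝ≥0∞)))
  simp only [Pi.mul_apply, mul_one, ENNReal.one_rpow, setLIntegral_one] at hholder
  have hexp : 1 / s.conjExponent = 1 - 1 / s := by
    rw [one_div, one_div, eq_sub_iff_add_eq, add_comm, hq.inv_add_inv_eq_one]
  rw [hexp] at hholder
  refine hholder.trans (mul_le_mul_left ?_ _)
  gcongr
  exact (lintegral_mono_set hE).trans (setLIntegral_ball_le_measure_mul_maxFn f x hR hball)

end MaximalFunction

theorem lintegral_annulus_le_maxFn {X : Type*} [MetricSpace X] [MeasurableSpace X]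
    [OpensMeasurableSpace X] {μ : Measure X} {D A s : ℝ} (hD : 0 ≤ D) (hA : 0 ≤ A)
    (hvol : ∀ (x : X) (R : ℝ), 0 < R → μ (ball x R) = ENNReal.ofReal (A * R ^ D))
    (hs : 1 < s) {f g : X → ℂ} (hf : AEStronglyMeasurable f μ) (x : X) {u δ : ℝ} (hu : 0 < u)
    (hδ : 0 < δ) (hδ1 : δ < 1)
    (hgf : ∀ y ∈ annulus x u (u * (1 + δ)), ‖g y‖ ≤ u ^ (-D) * ‖f y‖) :
    ∫⁻ y in annulus x u (u * (1 + δ)), ‖g y‖ₑ ∂μ ≤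
      ENNReal.ofReal ((A * 2 ^ D) ^ (1 / s) * (A * (Real.exp (2 * D) - 1)) ^ (1 - 1 / s) *
        δ ^ (1 - 1 / s)) * maxFn μ s f x ^ (1 / s) := by
  have h1s : 0 ≤ 1 / s := by positivity
  have he : 0 ≤ 1 - 1 / s := by rw [sub_nonneg, div_le_one (by linarith)]; exact hs.le
  have hκ : 0 ≤ Real.exp (2 * D) - 1 := by linarith [Real.add_one_le_exp (2 * D)]
  have huD : 0 < u ^ D := by positivity
  have hB : μ (ball x (2 * u)) = ENNReal.ofReal (u ^ D * (A * 2 ^ D)) := by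
    rw [hvol x _ (by positivity), Real.mul_rpow (by norm_num) hu.le]
    ring_nf
  have hsub : annulus x u (u * (1 + δ)) ⊆ ball x (2 * u) :=
    fun y hy => mem_ball'.2 (hy.2.trans_lt (by nlinarith))
  calc ∫⁻ y in annulus x u (u * (1 + δ)), ‖g y‖ₑ ∂μ
      ≤ ∫⁻ y in annulus x u (u * (1 + δ)), ENNReal.ofReal (u ^ (-D)) * ‖f y‖ₑ ∂μ := by
        refine setLIntegral_mono' (measurableSet_annulus x _ _) fun y hy => ?_
        rw [← ofReal_norm, ← ofReal_norm, ← ENNReal.ofReal_mul (by positivity)]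
        exact ENNReal.ofReal_le_ofReal (hgf y hy)
    _ = ENNReal.ofReal (u ^ (-D)) * ∫⁻ y in annulus x u (u * (1 + δ)), ‖f y‖ₑ ∂μ :=
        lintegral_const_mul' _ _ ENNReal.ofReal_ne_top
    _ ≤ ENNReal.ofReal (u ^ (-D)) * ((μ (ball x (2 * u)) * maxFn μ s f x) ^ (1 / s)
          * μ (annulus x u (u * (1 + δ))) ^ (1 - 1 / s)) := by
        gcongr
        exact setLIntegral_enorm_le_of_subset_ball hs hf.restrict (by positivity) hsub
          (hB ▸ ENNReal.ofReal_ne_top)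
    _ ≤ ENNReal.ofReal (u ^ (-D)) *
          ((ENNReal.ofReal (u ^ D * (A * 2 ^ D)) * maxFn μ s f x) ^ (1 / s)
          * ENNReal.ofReal (u ^ D * (A * (Real.exp (2 * D) - 1) * δ)) ^ (1 - 1 / s)) := by
        rw [hB]
        gcongr
        exact measure_annulus_le hD hA hvol x hu hδ hδ1.le
    _ = _ := by
        -- `u ^ D` factors out of both powers since `1 / s + (1 - 1 / s) = 1`, cancelling `u ^ (-D)`
        rw [ENNReal.mul_rpow_of_nonneg _ _ h1s, ENNReal.ofReal_rpow_of_nonneg (by positivity) h1s,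
          ENNReal.ofReal_rpow_of_nonneg (by positivity) he, mul_right_comm _ (maxFn μ s f x ^ _),
          ← mul_assoc, ← ENNReal.ofReal_mul (by positivity), ← ENNReal.ofReal_mul (by positivity),
          mul_rpow_mul_mul_rpow_of_add_eq_one huD.le (by positivity) (by positivity) (by ring),
          ← mul_assoc, Real.rpow_neg hu.le, inv_mul_cancel₀ huD.ne', one_mul,
          Real.mul_rpow (by positivity) hδ.le, mul_assoc]

lemma norm_indicator_sub_ZcutInf_mul_le {X : Type*} [MetricSpace X] (x : X) {δ u : ℝ}
    (hδ : 0 < δ) (hu : 0 < u) (g : X → ℂ) (y : X) :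
    ‖{y | u < dist x y}.indicator g y - (ZcutInf δ u (dist x y) : ℂ) * g y‖ ≤
      ‖(annulus x u (u * (1 + δ))).indicator g y‖ := by
  have hfactor : {y | u < dist x y}.indicator g y - (ZcutInf δ u (dist x y) : ℂ) * g y =
      (((Ioi u).indicator 1 (dist x y) - ZcutInf δ u (dist x y) : ℝ) : ℂ) * g y := by
    by_cases h : u < dist x y <;> simp [indicator, h, sub_mul]
  have hann : ‖(annulus x u (u * (1 + δ))).indicator g y‖ =
      (Ioc u (u * (1 + δ))).indicator 1 (dist x y) * ‖g y‖ := by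
    by_cases h : y ∈ annulus x u (u * (1 + δ))
    · rw [indicator_of_mem h, indicator_of_mem (show dist x y ∈ Ioc _ _ from h), Pi.one_apply,
        one_mul]
    · rw [indicator_of_notMem h, indicator_of_notMem (show dist x y ∉ Ioc _ _ from h), norm_zero,
        zero_mul]
  rw [hfactor, hann, norm_mul, Complex.norm_real, Real.norm_eq_abs]
  exact mul_le_mul_of_nonneg_right (abs_indicator_sub_ZcutInf_le hδ hu _) (norm_nonneg _)

section Truncation

variable {X : Type*} [MetricSpace X] [MeasurableSpace X] [OpensMeasurableSpace X]
  {μ : Measure X}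

theorem enorm_setIntegral_sub_integral_ZcutInf_le {g : X → ℂ} (hg : AEStronglyMeasurable g μ)
    (x : X) {δ u : ℝ} (hδ : 0 < δ) (hu : 0 < u)
    (hint : IntegrableOn g (annulus x u (u * (1 + δ))) μ) :
    ‖∫ y in {y | u < dist x y}, g y ∂μ - ∫ y, (ZcutInf δ u (dist x y) : ℂ) * g y ∂μ‖ₑ ≤
      ∫⁻ y in annulus x u (u * (1 + δ)), ‖g y‖ₑ ∂μ := by
  have hdist : Measurable (dist x) := (continuous_const.dist continuous_id).measurable
  have hS : MeasurableSet {y | u < dist x y} := measurableSet_lt measurable_const hdist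
  have hann := measurableSet_annulus x u (u * (1 + δ))
  have hpt := norm_indicator_sub_ZcutInf_mul_le x hδ hu g
  rw [← integral_indicator hS]
  refine (enorm_integral_sub_integral_le ?_).trans ?_
  · refine ((integrable_indicator_iff hann).2 hint).mono ?_ (ae_of_all _ hpt)
    have hZ : Measurable fun y => (ZcutInf δ u (dist x y) : ℂ) :=
      Complex.measurable_ofReal.comp ((measurable_ZcutInf hδ hu).comp hdist)
    exact (hg.indicator hS).sub (hZ.aestronglyMeasurable.mul hg)
  · rw [← lintegral_indicator hann]
    exact lintegral_mono fun y => by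
      rw [← enorm_indicator_eq_indicator_enorm]
      exact enorm_le_iff_norm_le.2 (hpt y)

end Truncation

theorem enorm_singOp_sub_singOpD_le {X : Type*} [MetricSpace X] [ProperSpace X]
    [MeasurableSpace X] [OpensMeasurableSpace X] {μ : Measure X} {D A s : ℝ} (hD : 0 ≤ D)
    (hA : 0 ≤ A) (hvol : ∀ (x : X) (R : ℝ), 0 < R → μ (ball x R) = ENNReal.ofReal (A * R ^ D))
    (hs : 1 < s) {K : X → X → ℂ} (hKm : Measurable (Function.uncurry K)) (x : X)
    (hK : ∀ y, x ≠ y → ‖K x y‖ ≤ dist x y ^ (-D)) {Q : X → ℝ} (hQ : Measurable Q)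
    {f : X → ℂ} (hf : LocallyIntegrable f μ) {u δ : ℝ} (hu : 0 < u) (hδ : 0 < δ) (hδ1 : δ < 1) :
    ‖singOp μ K u Q f x - singOpD μ K δ u Q f x‖ₑ ≤
      ENNReal.ofReal ((A * 2 ^ D) ^ (1 / s) * (A * (Real.exp (2 * D) - 1)) ^ (1 - 1 / s) *
        δ ^ (1 - 1 / s)) * maxFn μ s f x ^ (1 / s) := by
  set g : X → ℂ := fun y => K x y * f y * expi (Q y)
  have hg : AEStronglyMeasurable g μ := by
    refine (hKm.of_uncurry_left.aestronglyMeasurable.mul hf.aestronglyMeasurable).mul ?_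
    unfold expi
    exact (by fun_prop : Measurable fun y => Complex.exp (Q y * Complex.I)).aestronglyMeasurable
  have hgf : ∀ y ∈ annulus x u (u * (1 + δ)), ‖g y‖ ≤ u ^ (-D) * ‖f y‖ := by
    intro y hy
    have hxy : x ≠ y := fun h => by simpa [annulus, h, hu.not_gt] using hy.1
    rw [norm_mul, norm_mul, expi, Complex.norm_exp_ofReal_mul_I, mul_one]
    exact mul_le_mul_of_nonneg_right ((hK y hxy).trans
      (Real.rpow_le_rpow_of_nonpos hu hy.1.le (neg_nonpos.2 hD))) (norm_nonneg _)
  have hint : IntegrableOn g (annulus x u (u * (1 + δ))) μ := by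
    have hsub : annulus x u (u * (1 + δ)) ⊆ closedBall x (2 * u) :=
      fun y hy => mem_closedBall'.2 (hy.2.trans (by nlinarith))
    refine Integrable.mono' (((hf.integrableOn_isCompact (isCompact_closedBall x (2 * u))).mono_set
      hsub).norm.const_mul (u ^ (-D))) hg.restrict ?_
    exact (ae_restrict_iff' (measurableSet_annulus x _ _)).2 (ae_of_all _ hgf)
  have hsingOpD : singOpD μ K δ u Q f x = ∫ y, (ZcutInf δ u (dist x y) : ℂ) * g y ∂μ := by
    simp only [singOpD, g, mul_assoc]
  rw [singOp, hsingOpD]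
  exact (enorm_setIntegral_sub_integral_ZcutInf_le hg x hδ hu hint).trans
    (lintegral_annulus_le_maxFn hD hA hvol hs hf.aestronglyMeasurable x hu hδ hδ1 hgf)

variable {X : Type*} [MetricSpace X] [CompleteSpace X] [MeasurableSpace X] [BorelSpace X]

theorem stmt13_general (μ : Measure X) (D A : ℝ) (hD : 0 < D) (hA : 0 < A)
    (hvol : ∀ (x : X) (R : ℝ), 0 < R → μ (ball x R) = ENNReal.ofReal (A * R ^ D))
    (α : ℝ) (s : ℝ) (hs : 1 < s) :
    ∃ C > 0, ∀ K : X → X → ℂ, IsAlphaKernel D α K → ∀ Q : X → ℝ, Continuous Q →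
      ∀ f : X → ℂ, LocallyIntegrable f μ →
      ∀ (x : X) (u₀ u₁ δ : ℝ), 0 < u₀ → u₀ < u₁ → 0 < δ → δ < 1 →
        (‖singOp μ K u₀ Q f x - singOp μ K u₁ Q f x
            - singOpD μ K δ u₀ Q f x + singOpD μ K δ u₁ Q f x‖₊ : ℝ≥0∞) ≤
          ENNReal.ofReal (C * δ ^ (1 - 1 / s)) * maxFn μ s f x ^ (1 / s) := by
  have := properSpace_of_measure_ball_eq hA hvol
  set C := (A * 2 ^ D) ^ (1 / s) * (A * (Real.exp (2 * D) - 1)) ^ (1 - 1 / s)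
  have hC : 0 < C := by
    have : 0 < Real.exp (2 * D) - 1 := sub_pos.2 (Real.one_lt_exp_iff.2 (by positivity))
    positivity
  refine ⟨2 * C, by positivity, fun K hK Q hQ f hf x u₀ u₁ δ hu₀ hu₀₁ hδ hδ1 => ?_⟩
  have hbound := fun u (hu : 0 < u) => enorm_singOp_sub_singOpD_le hD.le hA.le hvol hs hK.1 x
    (hK.2.1 x) hQ.measurable hf hu hδ hδ1
  calc (‖singOp μ K u₀ Q f x - singOp μ K u₁ Q f x
            - singOpD μ K δ u₀ Q f x + singOpD μ K δ u₁ Q f x‖₊ : ℝ≥0∞)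
      = ‖(singOp μ K u₀ Q f x - singOpD μ K δ u₀ Q f x)
          - (singOp μ K u₁ Q f x - singOpD μ K δ u₁ Q f x)‖ₑ := by
        rw [← enorm_eq_nnnorm]; congr 1; ring
    _ ≤ ‖singOp μ K u₀ Q f x - singOpD μ K δ u₀ Q f x‖ₑ
          + ‖singOp μ K u₁ Q f x - singOpD μ K δ u₁ Q f x‖ₑ := enorm_sub_le
    _ ≤ ENNReal.ofReal (C * δ ^ (1 - 1 / s)) * maxFn μ s f x ^ (1 / s)
          + ENNReal.ofReal (C * δ ^ (1 - 1 / s)) * maxFn μ s f x ^ (1 / s) :=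
        add_le_add (hbound u₀ hu₀) (hbound u₁ (hu₀.trans hu₀₁))
    _ = ENNReal.ofReal (2 * C * δ ^ (1 - 1 / s)) * maxFn μ s f x ^ (1 / s) := by
        rw [← two_mul, ← mul_assoc, mul_assoc 2 C, ENNReal.ofReal_mul zero_le_two,
          ENNReal.ofReal_ofNat]

theorem stmt13 (μ : Measure X) (D A : ℝ) (hD : 0 < D) (hA : 0 < A)
    (hvol : ∀ (x : X) (R : ℝ), 0 < R → μ (ball x R) = ENNReal.ofReal (A * R ^ D))
    (α : ℝ) (hα : 0 < α) (hα1 : α ≤ 1) (s : ℝ) (hs : 1 < s) :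
    ∃ C > 0, ∀ K : X → X → ℂ, IsAlphaKernel D α K → ∀ Q : X → ℝ, Continuous Q →
      ∀ f : X → ℂ, LocallyIntegrable f μ →
      ∀ (x : X) (u₀ u₁ δ : ℝ), 0 < u₀ → u₀ < u₁ → 0 < δ → δ < 1 →
        (‖singOp μ K u₀ Q f x - singOp μ K u₁ Q f x
            - singOpD μ K δ u₀ Q f x + singOpD μ K δ u₁ Q f x‖₊ : ℝ≥0∞) ≤
          ENNReal.ofReal (C * δ ^ (1 - 1 / s)) * maxFn μ s f x ^ (1 / s) :=
  stmt13_general μ D A hD hA hvol α s hs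

end
end

section
/- Let G = (ℝⁿ, ∘, {δ_λ}) be a homogeneous Lie group with right-invariant homogeneous metric ρ and homogeneous dimension 𝐝. Then there exists a constant C₅ > 0 such that for all x, y in the unit ball B(0,1): ρ(x, x − y) ≤ C₅ · ρ(0, y)^{1/𝐝}, where x − y denotes the usual abelian (coordinatewise) subtraction on ℝⁿ and 0 is the group identity. -/
open MeasureTheory Complex Filter Set
open scoped ENNReal NNReal

noncomputable section

/-- The family of dilations `δ_λ(x)_i = λ^{σ_i} x_i`. -/
def dil {n : ℕ} (σ : Fin n → ℝ) (l : ℝ) (x : Fin n → ℝ) : Fin n → ℝ :=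
  fun i => l ^ σ i * x i

/-- A homogeneous Lie group structure on `ℝⁿ`: a polynomial group law `x ∘ y = x + y + P(x,y)`
with identity `0`, together with a family of automorphic dilations with exponents
`1 ≤ σ₁ ≤ … ≤ σₙ`, and a parameter `ε > 0` defining the homogeneous quasi-metric. -/
structure HomLieGroup (n : ℕ) where
  mul : (Fin n → ℝ) → (Fin n → ℝ) → Fin n → ℝ
  inv : (Fin n → ℝ) → Fin n → ℝ
  mul_assoc : ∀ x y z, mul (mul x y) z = mul x (mul y z)
  zero_mul : ∀ x, mul 0 x = x
  mul_zero : ∀ x, mul x 0 = x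
  inv_mul : ∀ x, mul (inv x) x = 0
  mul_inv : ∀ x, mul x (inv x) = 0
  mul_isPoly : ∃ p : Fin n → MvPolynomial (Fin n ⊕ Fin n) ℝ,
    ∀ x y i, mul x y i = MvPolynomial.eval (Sum.elim x y) (p i)
  σ : Fin n → ℝ
  one_le_σ : ∀ i, 1 ≤ σ i
  σ_mono : Monotone σ
  dil_mul : ∀ l : ℝ, 0 < l → ∀ x y, dil σ l (mul x y) = mul (dil σ l x) (dil σ l y)
  eps : ℝ
  eps_pos : 0 < eps

namespace HomLieGroup

variable {n : ℕ} (G : HomLieGroup n)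

/-- The homogeneous dimension `𝐝 = σ₁ + … + σₙ`. -/
def homDim : ℝ := ∑ i, G.σ i

/-- The homogeneous distance `ρ(x,y) = inf {λ > 0 : δ_{λ⁻¹}(x ∘ y⁻¹) ∈ U_ε}`. -/
def rho (x y : Fin n → ℝ) : ℝ :=
  sInf {l : ℝ | 0 < l ∧ ∑ j, (dil G.σ l⁻¹ (G.mul x (G.inv y)) j) ^ 2 < G.eps ^ 2}

/-- The assertion that `ρ` is a metric (the paper's choice of `ε` guarantees this;
right-invariance is automatic from the definition). -/
def IsMetric : Prop :=
  (∀ x y, 0 ≤ G.rho x y) ∧ (∀ x y, G.rho x y = 0 ↔ x = y) ∧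
    (∀ x y, G.rho x y = G.rho y x) ∧ (∀ x y z, G.rho x z ≤ G.rho x y + G.rho y z)

/-- The `ρ`-ball of radius `R` around `z`. -/
def ball (z : Fin n → ℝ) (R : ℝ) : Set (Fin n → ℝ) := {x | G.rho z x < R}

/-- Real-valued Leibman polynomial maps of degree at most `d` on `G`. -/
def IsLeibman : ℕ → ((Fin n → ℝ) → ℝ) → Prop
  | 0, f => ∀ g g', f (G.mul g' (G.inv g)) - f g' = 0
  | d + 1, f => ∀ g, IsLeibman d fun g' => f (G.mul g' (G.inv g)) - f g'

end HomLieGroup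

/-- A measure-preserving action of the homogeneous Lie group `G` on `(X, ν)`. -/
def IsMPAction {n : ℕ} (G : HomLieGroup n) {X : Type*} [MeasurableSpace X] (ν : Measure X)
    (T : (Fin n → ℝ) → X → X) : Prop :=
  Measurable (fun q : (Fin n → ℝ) × X => T q.1 q.2) ∧
    (∀ g h x, T (G.mul g h) x = T g (T h x)) ∧ (∀ x, T 0 x = x) ∧
    (∀ g, MeasurePreserving (T g) ν ν)

/-!
Put `|g| = ρ(g, 0)` and `z = x ∘ (x - y)⁻¹`, so that `ρ(x, x - y) = |z|` and
`z ∘ (x - y) - (x - y) = y`. Write the group law as `a ∘ b = a + b + Q(a, b)`. Since the dilations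
are automorphisms, `Q_i` is weighted homogeneous of degree `σ_i`, and since `Q(a, 0) = Q(0, b) = 0`,
each of its monomials contains some `a_j` and some `b_k`, hence some `a_j` with `σ_j < σ_i`. On a
bounded set this gives `|a_i| ≤ ‖a ∘ b - b‖ + C max_{σ_j < σ_i} |a_j|`, and induction along the
increasing exponents yields `‖z‖ ≤ K ‖y‖ ≤ K ε ρ(0, y)`. Finally, since every `σ_j ≤ 𝐝`, a point of
sup-norm `O(r)` with `r ≤ 1` has `|·| = O(r^{1/𝐝})`.
-/

theorem Real.linearIndependent_exp_mul :
    LinearIndependent ℝ (fun s τ : ℝ => Real.exp (s * τ)) := by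
  let e : ℝ → Multiplicative ℝ →* ℝ := fun s =>
    { toFun τ := Real.exp (s * τ.toAdd)
      map_one' := by simp
      map_mul' a b := by simp [mul_add, Real.exp_add] }
  have he : Function.Injective e := fun s s' h => by
    simpa [e] using DFunLike.congr_fun h (Multiplicative.ofAdd 1)
  exact (linearIndependent_monoidHom (Multiplicative ℝ) ℝ).comp e he

theorem Finset.abs_prod_pow_le_mul {ι : Type*} [DecidableEq ι] {s : Finset ι} {k : ι → ℕ}
    {x : ι → ℝ} {R M : ℝ} (hR : 1 ≤ R) (hx : ∀ i ∈ s, |x i| ≤ R) {i₀ : ι} (hi₀ : i₀ ∈ s)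
    (hk : k i₀ ≠ 0) (hM : |x i₀| ≤ M) : |∏ i ∈ s, x i ^ k i| ≤ M * R ^ ∑ i ∈ s, k i := by
  have hR₀ : 0 ≤ R := zero_le_one.trans hR
  obtain ⟨k₀, hk₀⟩ := Nat.exists_eq_succ_of_ne_zero hk
  have hfirst : |x i₀ ^ k i₀| ≤ M * R ^ k i₀ := by
    rw [abs_pow, hk₀, pow_succ', pow_succ]
    calc |x i₀| * |x i₀| ^ k₀ ≤ M * R ^ k₀ :=
          mul_le_mul hM (pow_le_pow_left₀ (abs_nonneg _) (hx i₀ hi₀) k₀) (by positivity)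
            ((abs_nonneg _).trans hM)
      _ ≤ M * (R ^ k₀ * R) := by
          gcongr
          · exact (abs_nonneg _).trans hM
          · exact le_mul_of_one_le_right (by positivity) hR
  have hrest : ∏ i ∈ s.erase i₀, |x i ^ k i| ≤ ∏ i ∈ s.erase i₀, R ^ k i :=
    Finset.prod_le_prod (fun _ _ => abs_nonneg _) fun i hi => by
      rw [abs_pow]; exact pow_le_pow_left₀ (abs_nonneg _) (hx i (Finset.mem_of_mem_erase hi)) _
  rw [Finset.abs_prod, ← Finset.mul_prod_erase s _ hi₀, ← Finset.add_sum_erase s _ hi₀,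
    pow_add, ← Finset.prod_pow_eq_pow_sum, ← mul_assoc]
  exact mul_le_mul hfirst hrest (Finset.prod_nonneg fun _ _ => abs_nonneg _)
    (mul_nonneg ((abs_nonneg _).trans hM) (by positivity))

theorem Finsupp.add_le_weight_of_ne_zero {σ M : Type*} [AddCommMonoid M] [PartialOrder M]
    [IsOrderedAddMonoid M] {w : σ → M} (hw : ∀ s, 0 ≤ w s) {f : σ →₀ ℕ} {s t : σ} (hst : s ≠ t)
    (hs : f s ≠ 0) (ht : f t ≠ 0) : w s + w t ≤ weight w f := by
  rw [← weight_sub_single_add hs, add_comm]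
  gcongr
  exact le_weight_of_ne_zero hw (by simpa [Finsupp.single_apply, hst] using ht)

namespace MvPolynomial

theorem sum_weightedHomogeneousComponent_of_subset {σ M R : Type*} [CommSemiring R]
    [AddCommMonoid M] {w : σ → M} {φ : MvPolynomial σ R} {T : Finset M}
    (hT : ∀ d ∈ φ.support, Finsupp.weight w d ∈ T) :
    ∑ s ∈ T, weightedHomogeneousComponent w s φ = φ := by
  rw [← finsum_eq_sum_of_support_subset _ fun s hs => ?_, sum_weightedHomogeneousComponent]
  by_contra hsT
  exact hs (weightedHomogeneousComponent_eq_zero' s φ fun d hd hds => hsT (hds ▸ hT d hd))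

variable {ι : Type*}

theorem IsWeightedHomogeneous.eval_rpow_mul {w : ι → ℝ} {φ : MvPolynomial ι ℝ} {t : ℝ}
    (hφ : φ.IsWeightedHomogeneous w t) {l : ℝ} (hl : 0 < l) (x : ι → ℝ) :
    eval (fun i => l ^ w i * x i) φ = l ^ t * eval x φ := by
  rw [eval_eq, eval_eq, Finset.mul_sum]
  refine Finset.sum_congr rfl fun d hd => ?_
  have hdt : ∑ i ∈ d.support, d i • w i = t := hφ (mem_support_iff.mp hd)
  simp_rw [mul_pow, Finset.prod_mul_distrib, ← Real.rpow_natCast, ← Real.rpow_mul hl.le,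
    ← Real.rpow_sum_of_pos hl, ← hdt, nsmul_eq_mul, mul_comm (w _)]
  ring

theorem isWeightedHomogeneous_of_eval_rpow_mul {w : ι → ℝ} {φ : MvPolynomial ι ℝ} {t : ℝ}
    (h : ∀ l : ℝ, 0 < l → ∀ x, eval (fun i => l ^ w i * x i) φ = l ^ t * eval x φ) :
    φ.IsWeightedHomogeneous w t := by
  classical
  intro d hd
  by_contra hdt
  set T := insert t (φ.support.image (Finsupp.weight w))
  have hdT : Finsupp.weight w d ∈ T :=
    Finset.mem_insert_of_mem (Finset.mem_image_of_mem _ (mem_support_iff.mpr hd))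
  have hsum : ∑ s ∈ T, weightedHomogeneousComponent w s φ = φ :=
    sum_weightedHomogeneousComponent_of_subset fun d' hd' =>
      Finset.mem_insert_of_mem (Finset.mem_image_of_mem _ hd')
  -- along `l = exp τ` the components scale by the linearly independent `τ ↦ exp (s * τ)`
  have hcomp : ∀ x, eval x (weightedHomogeneousComponent w (Finsupp.weight w d) φ) = 0 := by
    intro x
    have hexp : ∑ s ∈ T, (eval x (weightedHomogeneousComponent w s φ)
        - (if s = t then eval x φ else 0)) • (fun τ : ℝ => Real.exp (s * τ)) = 0 := by
      funext τ
      have hdil : ∑ s ∈ T, Real.exp (s * τ) * eval x (weightedHomogeneousComponent w s φ)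
          = Real.exp (t * τ) * eval x φ := by
        calc _ = ∑ s ∈ T, eval (fun i => Real.exp τ ^ w i * x i)
                (weightedHomogeneousComponent w s φ) := by
              refine Finset.sum_congr rfl fun s _ => ?_
              rw [(weightedHomogeneousComponent_isWeightedHomogeneous s φ).eval_rpow_mul
                (Real.exp_pos τ), ← Real.exp_mul, mul_comm τ]
          _ = eval (fun i => Real.exp τ ^ w i * x i) φ := by rw [← map_sum, hsum]
          _ = _ := by rw [h _ (Real.exp_pos τ), ← Real.exp_mul, mul_comm τ]
      simp only [Finset.sum_apply, Pi.smul_apply, smul_eq_mul, Pi.zero_apply, sub_mul,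
        Finset.sum_sub_distrib, ite_mul, zero_mul, Finset.sum_ite_eq']
      simp_rw [mul_comm _ (Real.exp _)]
      rw [hdil, if_pos (Finset.mem_insert_self t _), sub_self]
    have := linearIndependent_iff'.mp Real.linearIndependent_exp_mul T _ hexp _ hdT
    rwa [if_neg hdt, sub_zero] at this
  have hzero : weightedHomogeneousComponent w (Finsupp.weight w d) φ = 0 :=
    MvPolynomial.funext fun x => by rw [hcomp, map_zero]
  have := coeff_weightedHomogeneousComponent (w := w) (Finsupp.weight w d) φ d
  rw [if_pos rfl, hzero, coeff_zero] at this
  exact hd this.symm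

theorem mem_ideal_span_X_image_of_eval_eq_zero {q : MvPolynomial ι ℝ} {s : Set ι}
    (h : ∀ x : ι → ℝ, (∀ i ∈ s, x i = 0) → eval x q = 0) :
    q ∈ Ideal.span (X '' s : Set (MvPolynomial ι ℝ)) := by
  classical
  set I := Ideal.span (X '' s : Set (MvPolynomial ι ℝ))
  let f : ι → MvPolynomial ι ℝ := fun i => if i ∈ s then 0 else X i
  have hf : bind₁ f q = 0 := MvPolynomial.funext fun x => by
    rw [map_zero]
    refine (eval₂Hom_bind₁ (RingHom.id ℝ) x f q).trans (h _ fun i hi => ?_)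
    simp [f, hi]
  -- killing the variables in `s` does not change the class modulo the ideal they span
  have hmk : (Ideal.Quotient.mkₐ ℝ I).comp (bind₁ f) = Ideal.Quotient.mkₐ ℝ I := by
    ext i
    by_cases hi : i ∈ s
    · simpa [f, hi] using
        (Ideal.Quotient.eq_zero_iff_mem.mpr (Ideal.subset_span (Set.mem_image_of_mem X hi))).symm
    · simp [f, hi]
  rw [← Ideal.Quotient.eq_zero_iff_mem, ← Ideal.Quotient.mkₐ_eq_mk ℝ, ← hmk,
    AlgHom.comp_apply, hf, map_zero]

theorem abs_eval_le_mul {q : MvPolynomial ι ℝ} {s : Set ι}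
    (hq : q ∈ Ideal.span (X '' s : Set (MvPolynomial ι ℝ))) {x : ι → ℝ} {R M : ℝ} (hR : 1 ≤ R)
    (hx : ∀ i, |x i| ≤ R) (hM : ∀ i ∈ s, |x i| ≤ M) :
    |eval x q| ≤ (∑ d ∈ q.support, |coeff d q| * R ^ d.degree) * M := by
  classical
  rw [eval_eq, Finset.sum_mul]
  refine (Finset.abs_sum_le_sum_abs _ _).trans (Finset.sum_le_sum fun d hd => ?_)
  obtain ⟨i, hi, hdi⟩ := mem_ideal_span_X_image.mp hq d hd
  rw [abs_mul, mul_assoc, mul_comm (R ^ _)]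
  exact mul_le_mul_of_nonneg_left (Finset.abs_prod_pow_le_mul hR (fun j _ => hx j)
    (Finsupp.mem_support_iff.mpr hdi) hdi (hM i hi)) (abs_nonneg _)

end MvPolynomial

theorem Fin.le_pow_mul_of_le_add_mul {n : ℕ} {f : Fin n → ℝ} {b C : ℝ} (hb : 0 ≤ b) (hC : 0 ≤ C)
    (h : ∀ i M, 0 ≤ M → (∀ j < i, f j ≤ M) → f i ≤ b + C * M) (i : Fin n) :
    f i ≤ (1 + C) ^ n * b := by
  have hC₁ : 1 ≤ 1 + C := by linarith
  have key : ∀ i : Fin n, f i ≤ (1 + C) ^ ((i : ℕ) + 1) * b := by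
    intro i
    induction i using WellFoundedLT.induction with
    | _ i ih =>
      calc f i ≤ b + C * ((1 + C) ^ (i : ℕ) * b) :=
            h i _ (by positivity) fun j hj => (ih j hj).trans <|
              mul_le_mul_of_nonneg_right (pow_le_pow_right₀ hC₁ hj) hb
        _ ≤ (1 + C) ^ (i : ℕ) * b + C * ((1 + C) ^ (i : ℕ) * b) := by
            gcongr; exact le_mul_of_one_le_left hb (one_le_pow₀ hC₁)
        _ = (1 + C) ^ ((i : ℕ) + 1) * b := by ring
  exact (key i).trans (mul_le_mul_of_nonneg_right (pow_le_pow_right₀ hC₁ i.isLt) hb)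

namespace HomLieGroup

variable {n : ℕ} (G : HomLieGroup n)

def scales (g : Fin n → ℝ) : Set ℝ := {l | 0 < l ∧ ∑ j, (dil G.σ l⁻¹ g j) ^ 2 < G.eps ^ 2}

def hnorm (g : Fin n → ℝ) : ℝ := sInf (G.scales g)

theorem inv_zero : G.inv 0 = 0 := by simpa [G.mul_zero] using G.inv_mul 0

theorem rho_eq_hnorm (x y : Fin n → ℝ) : G.rho x y = G.hnorm (G.mul x (G.inv y)) := rfl

theorem rho_zero_right (x : Fin n → ℝ) : G.rho x 0 = G.hnorm x := by
  rw [rho_eq_hnorm, inv_zero, mul_zero]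

theorem σ_nonneg (j : Fin n) : 0 ≤ G.σ j := zero_le_one.trans (G.one_le_σ j)

theorem σ_le_homDim (j : Fin n) : G.σ j ≤ G.homDim :=
  Finset.single_le_sum (fun i _ => G.σ_nonneg i) (Finset.mem_univ j)

theorem natCast_mul_eps_div_sq_lt : (n : ℝ) * (G.eps / (n + 1)) ^ 2 < G.eps ^ 2 := by
  have hε := G.eps_pos
  have hn : (n : ℝ) < (n + 1) ^ 2 := by nlinarith
  rw [div_pow, ← mul_div_assoc, div_lt_iff₀ (by positivity)]
  nlinarith [mul_lt_mul_of_pos_left hn (pow_pos hε 2)]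

theorem mem_scales_of_abs_le {g : Fin n → ℝ} {t c : ℝ} (ht : 0 < t)
    (hc : (n : ℝ) * c ^ 2 < G.eps ^ 2) (hg : ∀ j, |g j| ≤ c * t ^ G.σ j) : t ∈ G.scales g := by
  refine ⟨ht, lt_of_le_of_lt ?_ hc⟩
  calc ∑ j, (dil G.σ t⁻¹ g j) ^ 2 ≤ ∑ _j : Fin n, c ^ 2 := Finset.sum_le_sum fun j _ => ?_
    _ = n * c ^ 2 := by simp
  have hpos : 0 < t ^ G.σ j := Real.rpow_pos_of_pos ht _
  have hdil : |dil G.σ t⁻¹ g j| ≤ c := by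
    rw [dil, abs_mul, Real.inv_rpow ht.le, abs_inv, abs_of_pos hpos, inv_mul_le_iff₀ hpos,
      mul_comm]
    exact hg j
  rw [← sq_abs]
  exact pow_le_pow_left₀ (abs_nonneg _) hdil 2

theorem hnorm_le_of_abs_le {g : Fin n → ℝ} {t c : ℝ} (ht : 0 < t)
    (hc : (n : ℝ) * c ^ 2 < G.eps ^ 2) (hg : ∀ j, |g j| ≤ c * t ^ G.σ j) : G.hnorm g ≤ t :=
  csInf_le ⟨0, fun _ hl => hl.1.le⟩ (G.mem_scales_of_abs_le ht hc hg)

theorem scales_nonempty (g : Fin n → ℝ) : (G.scales g).Nonempty := by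
  have hε := G.eps_pos
  set c := G.eps / (n + 1)
  have hc : 0 < c := by positivity
  refine ⟨1 + ‖g‖ / c, G.mem_scales_of_abs_le (by positivity) G.natCast_mul_eps_div_sq_lt
    fun j => ?_⟩
  have h1 : 1 ≤ 1 + ‖g‖ / c := le_add_of_nonneg_right (by positivity)
  calc |g j| ≤ ‖g‖ := norm_le_pi_norm g j
    _ = c * (‖g‖ / c) := by field_simp
    _ ≤ c * (1 + ‖g‖ / c) := by gcongr; linarith
    _ ≤ c * (1 + ‖g‖ / c) ^ G.σ j := by gcongr; exact Real.self_le_rpow_of_one_le h1 (G.one_le_σ j)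

theorem hnorm_nonneg (g : Fin n → ℝ) : 0 ≤ G.hnorm g :=
  le_csInf (G.scales_nonempty g) fun _ hl => hl.1.le

theorem hnorm_zero : G.hnorm 0 = 0 := by
  have : G.scales 0 = Set.Ioi 0 := by
    ext l
    simp [scales, dil, pow_pos G.eps_pos]
  rw [hnorm, this, csInf_Ioi]

theorem abs_lt_of_mem_scales {g : Fin n → ℝ} {l : ℝ} (hl : l ∈ G.scales g) (j : Fin n) :
    |g j| < G.eps * l ^ G.σ j := by
  have hpos : 0 < l ^ G.σ j := Real.rpow_pos_of_pos hl.1 _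
  have hdil : |dil G.σ l⁻¹ g j| < G.eps :=
    abs_lt_of_sq_lt_sq ((Finset.single_le_sum (fun j _ => sq_nonneg (dil G.σ l⁻¹ g j))
      (Finset.mem_univ j)).trans_lt hl.2) G.eps_pos.le
  rwa [dil, abs_mul, Real.inv_rpow hl.1.le, abs_inv, abs_of_pos hpos, inv_mul_lt_iff₀ hpos,
    mul_comm] at hdil

theorem norm_le_of_hnorm_lt {g : Fin n → ℝ} {t : ℝ} (ht : 1 ≤ t) (h : G.hnorm g < t) :
    ‖g‖ ≤ G.eps * t ^ G.homDim := by
  obtain ⟨l, hl, hlt⟩ := exists_lt_of_csInf_lt (G.scales_nonempty g) h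
  refine (pi_norm_le_iff_of_nonneg (by have := G.eps_pos; positivity)).mpr fun j => ?_
  calc ‖g j‖ ≤ G.eps * l ^ G.σ j := (G.abs_lt_of_mem_scales hl j).le
    _ ≤ G.eps * t ^ G.σ j := by
        gcongr; exacts [G.eps_pos.le, hl.1.le, G.σ_nonneg j]
    _ ≤ G.eps * t ^ G.homDim :=
        mul_le_mul_of_nonneg_left (Real.rpow_le_rpow_of_exponent_le ht (G.σ_le_homDim j))
          G.eps_pos.le

theorem norm_le_of_hnorm_lt_one {g : Fin n → ℝ} (h : G.hnorm g < 1) :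
    ‖g‖ ≤ G.eps * G.hnorm g := by
  have hε := G.eps_pos
  refine (pi_norm_le_iff_of_nonneg (mul_nonneg hε.le (G.hnorm_nonneg g))).mpr fun j => ?_
  rw [Real.norm_eq_abs, ← div_le_iff₀' hε]
  refine le_of_forall_gt_imp_ge_of_dense fun b hb => ?_
  obtain ⟨l, hl, hlt⟩ := exists_lt_of_csInf_lt (G.scales_nonempty g) (lt_min hb h)
  rw [div_le_iff₀' hε]
  calc |g j| ≤ G.eps * l ^ G.σ j := (G.abs_lt_of_mem_scales hl j).le
    _ ≤ G.eps * l := by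
        gcongr; exact Real.rpow_le_self_of_le_one hl.1.le (hlt.le.trans (min_le_right _ _))
          (G.one_le_σ j)
    _ ≤ G.eps * b := by gcongr; exact hlt.le.trans (min_le_left _ _)

theorem exists_hnorm_le_mul_rpow (M : ℝ) :
    ∃ C > 0, ∀ g r, 0 ≤ r → r ≤ 1 → ‖g‖ ≤ M * r → G.hnorm g ≤ C * r ^ (1 / G.homDim) := by
  have hε := G.eps_pos
  set c := G.eps / (n + 1)
  have hc : 0 < c := by positivity
  set C := max 1 (M / c)
  refine ⟨C, by positivity, fun g r hr0 hr1 hg => ?_⟩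
  rcases eq_or_ne g 0 with rfl | hg0
  · rw [hnorm_zero]; positivity
  obtain ⟨j₀, -⟩ := Function.ne_iff.mp hg0
  have hd : 0 < G.homDim := zero_lt_one.trans_le ((G.one_le_σ j₀).trans (G.σ_le_homDim j₀))
  have hr : 0 < r := by
    refine hr0.lt_of_ne fun hr => hg0 (norm_le_zero_iff.mp ?_)
    simpa [← hr] using hg
  set s := r ^ (1 / G.homDim)
  have hs0 : 0 < s := Real.rpow_pos_of_pos hr _
  have hs1 : s ≤ 1 := Real.rpow_le_one hr0 hr1 (by positivity)
  have hsd : s ^ G.homDim = r := by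
    rw [← Real.rpow_mul hr0, one_div_mul_cancel hd.ne', Real.rpow_one]
  refine G.hnorm_le_of_abs_le (by positivity) G.natCast_mul_eps_div_sq_lt fun j => ?_
  calc |g j| ≤ M * r := (norm_le_pi_norm g j).trans hg
    _ ≤ c * C * s ^ G.homDim := by
        rw [hsd]; gcongr
        calc M = c * (M / c) := by field_simp
          _ ≤ c * C := by gcongr; exact le_max_right _ _
    _ ≤ c * (C * s) ^ G.σ j := by
        rw [_root_.mul_assoc, Real.mul_rpow (by positivity) hs0.le]
        gcongr c * ?_
        exact mul_le_mul (Real.self_le_rpow_of_one_le (le_max_left _ _) (G.one_le_σ j))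
          (Real.rpow_le_rpow_of_exponent_ge hs0 hs1 (G.σ_le_homDim j)) (by positivity)
          (by positivity)

open MvPolynomial in
theorem exists_mul_eq_add_add_eval : ∃ q : Fin n → MvPolynomial (Fin n ⊕ Fin n) ℝ,
    (∀ a b i, G.mul a b i = a i + b i + eval (Sum.elim a b) (q i)) ∧
      ∀ i, q i ∈ Ideal.span (X '' (Sum.inl '' {j | G.σ j < G.σ i})) := by
  obtain ⟨p, hp⟩ := G.mul_isPoly
  set q := fun i => p i - X (Sum.inl i) - X (Sum.inr i)
  have heval : ∀ a b i, eval (Sum.elim a b) (q i) = G.mul a b i - a i - b i := by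
    simp [q, hp]
  refine ⟨q, fun a b i => by rw [heval]; ring, fun i => ?_⟩
  have hhom : (q i).IsWeightedHomogeneous (Sum.elim G.σ G.σ) (G.σ i) := by
    refine isWeightedHomogeneous_of_eval_rpow_mul fun l hl x => ?_
    have hdil : (fun v => l ^ Sum.elim G.σ G.σ v * x v)
        = Sum.elim (dil G.σ l (x ∘ Sum.inl)) (dil G.σ l (x ∘ Sum.inr)) := by
      funext v; cases v <;> rfl
    rw [hdil, heval, ← G.dil_mul l hl]
    conv_rhs => rw [← Sum.elim_comp_inl_inr x, heval]
    simp only [dil]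
    ring
  have hleft : q i ∈ Ideal.span (X '' Set.range Sum.inl) :=
    mem_ideal_span_X_image_of_eval_eq_zero fun x hx => by
      have : x = Sum.elim (0 : Fin n → ℝ) (x ∘ Sum.inr) := by
        funext v; cases v with
        | inl j => exact hx _ (Set.mem_range_self j)
        | inr k => rfl
      rw [this, heval, G.zero_mul]; simp
  have hright : q i ∈ Ideal.span (X '' Set.range Sum.inr) :=
    mem_ideal_span_X_image_of_eval_eq_zero fun x hx => by
      have : x = Sum.elim (x ∘ Sum.inl) (0 : Fin n → ℝ) := by
        funext v; cases v with
        | inl j => rfl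
        | inr k => exact hx _ (Set.mem_range_self k)
      rw [this, heval, G.mul_zero]; simp
  rw [mem_ideal_span_X_image] at hleft hright ⊢
  intro m hm
  obtain ⟨_, ⟨j, rfl⟩, hj⟩ := hleft m hm
  obtain ⟨_, ⟨k, rfl⟩, hk⟩ := hright m hm
  refine ⟨Sum.inl j, ⟨j, ?_, rfl⟩, hj⟩
  have hjk := Finsupp.add_le_weight_of_ne_zero (w := Sum.elim G.σ G.σ)
    (by rintro (_ | _) <;> exact G.σ_nonneg _) Sum.inl_ne_inr hj hk
  rw [hhom (mem_support_iff.mp hm), Sum.elim_inl, Sum.elim_inr] at hjk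
  show G.σ j < G.σ i
  linarith [G.one_le_σ k]

theorem exists_norm_le_mul_norm_mul_sub (R : ℝ) :
    ∃ K > 0, ∀ a b, ‖a‖ ≤ R → ‖b‖ ≤ R → ‖a‖ ≤ K * ‖G.mul a b - b‖ := by
  obtain ⟨q, hmul, hq⟩ := G.exists_mul_eq_add_add_eval
  set R' := max R 1
  set C := ∑ i, ∑ d ∈ (q i).support, |(q i).coeff d| * R' ^ d.degree
  have hC : 0 ≤ C := by positivity
  refine ⟨(1 + C) ^ n, by positivity, fun a b ha hb => ?_⟩
  have hab : ∀ v, |Sum.elim a b v| ≤ R' := by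
    rintro (j | j)
    · exact (norm_le_pi_norm a j).trans (ha.trans (le_max_left _ _))
    · exact (norm_le_pi_norm b j).trans (hb.trans (le_max_left _ _))
  refine (pi_norm_le_iff_of_nonneg (by positivity)).mpr
    (Fin.le_pow_mul_of_le_add_mul (norm_nonneg _) hC fun i M hM hlow => ?_)
  have hqi := MvPolynomial.abs_eval_le_mul (hq i) (le_max_right R 1) hab (M := M) <| by
    rintro _ ⟨j, hj, rfl⟩
    exact hlow j (G.σ_mono.reflect_lt hj)
  have hCi : ∑ d ∈ (q i).support, |(q i).coeff d| * R' ^ d.degree ≤ C :=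
    Finset.single_le_sum (f := fun i => ∑ d ∈ (q i).support, |(q i).coeff d| * R' ^ d.degree)
      (fun _ _ => by positivity) (Finset.mem_univ i)
  calc ‖a i‖ = ‖(G.mul a b - b) i - MvPolynomial.eval (Sum.elim a b) (q i)‖ := by
        rw [Pi.sub_apply, hmul]; ring_nf
    _ ≤ ‖(G.mul a b - b) i‖ + ‖MvPolynomial.eval (Sum.elim a b) (q i)‖ := norm_sub_le _ _
    _ ≤ ‖G.mul a b - b‖ + C * M :=
        add_le_add (norm_le_pi_norm _ i) (hqi.trans (mul_le_mul_of_nonneg_right hCi hM))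

end HomLieGroup

theorem stmt17 {n : ℕ} (G : HomLieGroup n) (hρ : G.IsMetric) :
    ∃ C₅ > 0, ∀ x y : Fin n → ℝ, G.rho 0 x < 1 → G.rho 0 y < 1 →
      G.rho x (x - y) ≤ C₅ * G.rho 0 y ^ (1 / G.homDim) := by
  obtain ⟨-, -, hsymm, htri⟩ := hρ
  have hnorm_eq : ∀ x, G.hnorm x = G.rho 0 x := fun x => by rw [← G.rho_zero_right, hsymm]
  obtain ⟨T, hT0, hT⟩ := G.exists_hnorm_le_mul_rpow (2 * G.eps)
  obtain ⟨K, hK, hKnorm⟩ :=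
    G.exists_norm_le_mul_norm_mul_sub (max (2 * G.eps) (G.eps * (T + 2) ^ G.homDim))
  obtain ⟨C, hC, hCnorm⟩ := G.exists_hnorm_le_mul_rpow (K * G.eps)
  refine ⟨C, hC, fun x y hx hy => ?_⟩
  have hε := G.eps_pos
  have hx' : ‖x‖ ≤ G.eps := (G.norm_le_of_hnorm_lt_one (hnorm_eq x ▸ hx)).trans <| by
    rw [hnorm_eq]; nlinarith
  have hy' : ‖y‖ ≤ G.eps * G.rho 0 y := hnorm_eq y ▸ G.norm_le_of_hnorm_lt_one (hnorm_eq y ▸ hy)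
  have hu : ‖x - y‖ ≤ 2 * G.eps := (norm_sub_le x y).trans (by nlinarith)
  set z := G.mul x (G.inv (x - y))
  have hz : G.hnorm z < T + 2 := calc
    G.hnorm z ≤ G.rho x 0 + G.rho 0 (x - y) := htri _ _ _
    _ < 1 + (T + 1) := by
      rw [hsymm x 0]
      have := hT (x - y) 1 zero_le_one le_rfl (by rwa [mul_one])
      rw [Real.one_rpow, mul_one, hnorm_eq] at this
      linarith
    _ = T + 2 := by ring
  have hzy : G.mul z (x - y) - (x - y) = y := by
    rw [G.mul_assoc, G.inv_mul, G.mul_zero, sub_sub_cancel]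
  refine hCnorm z _ (hnorm_eq y ▸ G.hnorm_nonneg y) hy.le ?_
  calc ‖z‖ ≤ K * ‖y‖ := hzy ▸ hKnorm z (x - y) ((G.norm_le_of_hnorm_lt (by linarith) hz).trans
        (le_max_right _ _)) (hu.trans (le_max_left _ _))
    _ ≤ K * G.eps * G.rho 0 y := by rw [mul_assoc]; gcongr
end
end
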